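/- Let G = (A, SPath^T_w) be a two-player zero-sum shortest-path game on a possibly infinite arena. For every α ∈ ℕ there exists a memoryless strategy σ_2^α of player 2 such that: (i) from every vertex v in player 2's winning region for the objective Safe(T) (equivalently, the complement of player 1's winning region for Reach(T)), every play consistent with σ_2^α from v never visits T; and (ii) from every vertex v, every play consistent with σ_2^α from v has shortest-path cost at least min{val(v), α}. -/

import Mathlib

open scoped ENNReal Classical

/-- An `n`-player arena on a (possibly infinite) directed graph: an edge relation
with no deadlocks, together with an assignment of each vertex to its owner. -/
structure Arena (V : Type) (n : ℕ) where
  E : V → V → Prop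
  owner : V → Fin n
  no_deadlock : ∀ v, ∃ v', E v v'

namespace Arena

variable {V : Type} {n : ℕ}

/-- A play: an infinite sequence of vertices following edges. -/
def IsPlay (A : Arena V n) (π : ℕ → V) : Prop := ∀ j, A.E (π j) (π (j + 1))

/-- A strategy: given the past history (the earlier vertices, oldest first) and the
current vertex, pick an `E`-successor of the current vertex. -/
structure Strategy (A : Arena V n) where
  next : List V → V → V
  valid : ∀ h v, A.E v (next h v)

/-- The list of the first `j` vertices of a play. -/
def pref (π : ℕ → V) (j : ℕ) : List V := (List.range j).map π

/-- A play is consistent with the strategy `σ` used by player `i`. -/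
def Consistent (A : Arena V n) (i : Fin n) (σ : A.Strategy) (π : ℕ → V) : Prop :=
  ∀ j, A.owner (π j) = i → π (j + 1) = σ.next (pref π j) (π j)

/-- A memoryless strategy only depends on the current vertex. -/
def Memoryless {A : Arena V n} (σ : A.Strategy) : Prop :=
  ∀ h h' v, σ.next h v = σ.next h' v

def outcomeAux (A : Arena V n) (σ : Fin n → A.Strategy) (v0 : V) : ℕ → List V × V
  | 0 => ([], v0)
  | j + 1 =>
      let p := outcomeAux A σ v0 j
      (p.1 ++ [p.2], (σ (A.owner p.2)).next p.1 p.2)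

/-- The outcome of the strategy profile `σ` from `v0`: the unique play from `v0`
consistent with every strategy of the profile. -/
def outcome (A : Arena V n) (σ : Fin n → A.Strategy) (v0 : V) (j : ℕ) : V :=
  (outcomeAux A σ v0 j).2

/-- Reachability objective: visit `T`. -/
def ReachObj (T : Set V) : Set (ℕ → V) := {π | ∃ j, π j ∈ T}

/-- Safety objective: never visit `T`. -/
def SafeObj (T : Set V) : Set (ℕ → V) := {π | ∀ j, π j ∉ T}

/-- Büchi objective: visit `T` infinitely often. -/
def BuchiObj (T : Set V) : Set (ℕ → V) := {π | ∀ j, ∃ k, j ≤ k ∧ π k ∈ T}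

/-- co-Büchi objective: visit `T` only finitely often. -/
def CoBuchiObj (T : Set V) : Set (ℕ → V) := {π | ∃ j, ∀ k, j ≤ k → π k ∉ T}

/-- Shortest-path cost of a play: the total weight up to the first visit of `T`,
and `⊤` if `T` is never visited. -/
noncomputable def spCost (w : V → V → ℕ) (T : Set V) (π : ℕ → V) : ℝ≥0∞ :=
  if ∃ k, π k ∈ T then
    (Finset.range (sInf {k | π k ∈ T})).sum fun j => (w (π j) (π (j + 1)) : ℝ≥0∞)
  else ⊤

/-- Winning region of player `p` (whose objective is `Ω`) in a two-player game:
vertices from which `p` has a strategy all of whose consistent plays lie in `Ω`. -/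
def WinRegion (A : Arena V 2) (p : Fin 2) (Ω : Set (ℕ → V)) : Set V :=
  {v | ∃ σ : A.Strategy, ∀ π, A.IsPlay π → π 0 = v → A.Consistent p σ π → π ∈ Ω}

/-- Lower value `inf_{σ₁} sup_{σ₂}` of a two-player zero-sum game with cost `c`
(minimised by player 1, maximised by player 2). -/
noncomputable def valIS (A : Arena V 2) (c : (ℕ → V) → ℝ≥0∞) (v : V) : ℝ≥0∞ :=
  ⨅ σ1 : A.Strategy, ⨆ σ2 : A.Strategy, c (outcome A ![σ1, σ2] v)

/-- Upper value `sup_{σ₂} inf_{σ₁}`. -/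
noncomputable def valSI (A : Arena V 2) (c : (ℕ → V) → ℝ≥0∞) (v : V) : ℝ≥0∞ :=
  ⨆ σ2 : A.Strategy, ⨅ σ1 : A.Strategy, c (outcome A ![σ1, σ2] v)

/-- Nash equilibrium from `v0` for cost functions (each player minimises):
no unilateral deviation decreases the deviator's cost. -/
def IsNECost (A : Arena V n) (cost : Fin n → (ℕ → V) → ℝ≥0∞)
    (σ : Fin n → A.Strategy) (v0 : V) : Prop :=
  ∀ (i : Fin n) (τ : A.Strategy),
    cost i (outcome A σ v0) ≤ cost i (outcome A (Function.update σ i τ) v0)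

/-- Nash equilibrium from `v0` for objectives: if a unilateral deviation of player `i`
satisfies `Ω i`, then so does the equilibrium outcome. -/
def IsNEObj (A : Arena V n) (Ω : Fin n → Set (ℕ → V))
    (σ : Fin n → A.Strategy) (v0 : V) : Prop :=
  ∀ (i : Fin n) (τ : A.Strategy),
    outcome A (Function.update σ i τ) v0 ∈ Ω i → outcome A σ v0 ∈ Ω i

/-- The coalition arena of player `i`: player `i` (as player `0`) against all others. -/
def coalition (A : Arena V n) (i : Fin n) : Arena V 2 where
  E := A.E
  owner := fun v => if A.owner v = i then 0 else 1
  no_deadlock := A.no_deadlock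

/-- Winning region of player `i` in their coalition game for objective `Ω`. -/
def coalWin (A : Arena V n) (i : Fin n) (Ω : Set (ℕ → V)) : Set V :=
  WinRegion (coalition A i) 0 Ω

/-- Value of a vertex in player `i`'s coalition game with cost `c`. -/
noncomputable def coalVal (A : Arena V n) (i : Fin n) (c : (ℕ → V) → ℝ≥0∞) (v : V) :
    ℝ≥0∞ :=
  valIS (coalition A i) c v

/-- Players whose reachability objective is satisfied by `π`. -/
def satReach (T : Fin n → Set V) (π : ℕ → V) : Set (Fin n) := {i | ∃ j, π j ∈ T i}

/-- Players whose safety objective is satisfied by `π`. -/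
def satSafe (T : Fin n → Set V) (π : ℕ → V) : Set (Fin n) := {i | ∀ j, π j ∉ T i}

/-- Players whose Büchi objective is satisfied by `π`. -/
def satBuchi (T : Fin n → Set V) (π : ℕ → V) : Set (Fin n) :=
  {i | ∀ j, ∃ k, j ≤ k ∧ π k ∈ T i}

/-- Players whose co-Büchi objective is satisfied by `π`. -/
def satCoBuchi (T : Fin n → Set V) (π : ℕ → V) : Set (Fin n) :=
  {i | ∃ j, ∀ k, j ≤ k → π k ∉ T i}

/-- Earliest positions at which the targets visited by `π` are first visited. -/
def visitSet (T : Fin n → Set V) (π : ℕ → V) : Set ℕ :=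
  {m | ∃ i, (∃ j, π j ∈ T i) ∧ m = sInf {j | π j ∈ T i}}

/-- A Mealy machine with memory states `M`. -/
structure Mealy (A : Arena V n) (M : Type) where
  init : M
  up : M → V → M
  nxt : M → V → V
  valid : ∀ m v, A.E v (nxt m v)

/-- The strategy `σ` is induced by the Mealy machine `mm`. -/
def InducedBy {A : Arena V n} {M : Type} (σ : A.Strategy) (mm : Mealy A M) : Prop :=
  ∀ h v, σ.next h v = mm.nxt (h.foldl mm.up mm.init) v

/-- `σ` has memory size at most `b`. -/
def HasMemorySize {A : Arena V n} (σ : A.Strategy) (b : ℕ) : Prop :=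
  ∃ (M : Type) (mm : Mealy A M), Finite M ∧ Nat.card M ≤ b ∧ InducedBy σ mm

/-- `σ` is a finite-memory strategy. -/
def FiniteMemory {A : Arena V n} (σ : A.Strategy) : Prop :=
  ∃ (M : Type) (mm : Mealy A M), Finite M ∧ InducedBy σ mm

/-- The (finite) segment of `π` between positions `a` and `b` is a simple history. -/
def SimpleSeg (π : ℕ → V) (a b : ℕ) : Prop :=
  ∀ m m', a ≤ m → m ≤ b → a ≤ m' → m' ≤ b → π m = π m' → m = m'

/-- The suffix of `π` from position `a` is a simple play. -/
def SimplePlaySeg (π : ℕ → V) (a : ℕ) : Prop :=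
  ∀ m m', a ≤ m → a ≤ m' → π m = π m' → m = m'

/-- The suffix of `π` from position `a` is a simple lasso `p c^ω` with `p c`
a simple history. -/
def SimpleLassoSeg (π : ℕ → V) (a : ℕ) : Prop :=
  ∃ k ℓ, 0 < ℓ ∧ (∀ m, a + k ≤ m → π (m + ℓ) = π m) ∧
    ∀ m m', a ≤ m → m < a + k + ℓ → a ≤ m' → m' < a + k + ℓ → π m = π m' → m = m'

/-- The segment of `π` between positions `a` and `b` is a simple cycle. -/
def SimpleCycleSeg (π : ℕ → V) (a b : ℕ) : Prop :=
  a < b ∧ π b = π a ∧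
    ∀ m m', a ≤ m → m < b → a ≤ m' → m' < b → π m = π m' → m = m'

/-- Total weight of a history (a list of vertices). -/
def histWeight (w : V → V → ℕ) : List V → ℕ
  | [] => 0
  | [_] => 0
  | a :: b :: t => w a b + histWeight w (b :: t)

/-- The list of vertices along positions `a..b` (inclusive) of a play. -/
def segList (π : ℕ → V) (a b : ℕ) : List V :=
  (List.range (b - a + 1)).map fun m => π (a + m)

/-- The segment of `π` between positions `a` and `b` has minimal weight among all
histories that share its first and last vertex and traverse only its vertices. -/
def MinWeightSeg (A : Arena V n) (w : V → V → ℕ) (π : ℕ → V) (a b : ℕ) : Prop :=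
  ∀ h : List V, h ≠ [] → List.Chain' A.E h →
    h.head? = some (π a) → h.getLast? = some (π b) →
    (∀ x ∈ h, ∃ m, a ≤ m ∧ m ≤ b ∧ π m = x) →
    histWeight w (segList π a b) ≤ histWeight w h

/-- Given cut positions `p`, segments number `l` and `l'` of `π` carry the same
vertex sequence. -/
def SegEq (π : ℕ → V) (p : ℕ → ℕ) (l l' : ℕ) : Prop :=
  p (l' + 1) - p l' = p (l + 1) - p l ∧
    ∀ m, m ≤ p (l + 1) - p l → π (p l' + m) = π (p l + m)

/-- There is no cycle of the arena using only vertices of `S` and avoiding `avoid`. -/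
def NoCycleAvoid (A : Arena V n) (S : Set V) (avoid : V) : Prop :=
  ¬ ∃ (m : ℕ) (c : ℕ → V), 0 < m ∧ (∀ j, j < m → A.E (c j) (c (j + 1))) ∧
      c m = c 0 ∧ ∀ j, j ≤ m → c j ∈ S ∧ c j ≠ avoid

end Arena

open Arena

/-!
Let `g v = min (val v) α`. Values of shortest-path games lie in `ℕ ∪ {∞}`, so `g` takes natural
values. Outside `T`, `val v ≤ w v v' + val v'` for every move `v → v'` of player 1 (play `v'`, then
continue optimally), and at every vertex `val v ≤ ⨆ v', w v v' + val v'` (player 1 answers each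
first move with a nearly optimal strategy). Capping at `α` turns this supremum into a maximum over
natural numbers, so player 2 has a memoryless choice of successors along which `g` drops by at most
the edge weight; as `g = 0` on `T`, `g v` bounds the cost of every consistent play from `v`.
On the safety winning region `g = α`, and there player 2 simply keeps the play inside the region.
-/

namespace ENNReal

lemma exists_eq_iSup_of_mem_range_toENNReal {ι : Type*} [Nonempty ι] {f : ι → ℝ≥0∞}
    (hf : ∀ i, f i ∈ Set.range ENat.toENNReal) (hlt : ⨆ i, f i < ⊤) : ∃ i, f i = ⨆ i, f i := by
  choose g hg using hf
  simp only [← hg, ← ENat.toENNReal_iSup, ENat.toENNReal_lt_top] at hlt ⊢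
  obtain ⟨i, hi⟩ := ENat.exists_eq_iSup_of_lt_top hlt
  exact ⟨i, by rw [hi]⟩

lemma min_add_le_add_min (a b c : ℝ≥0∞) : min (a + b) c ≤ a + min b c :=
  (min_le_min_left _ le_add_self).trans (min_add_add_left a b c).le

end ENNReal

namespace Arena

variable {V : Type} {n : ℕ}

lemma pref_succ (π : ℕ → V) (j : ℕ) : pref π (j + 1) = pref π j ++ [π j] := by
  simp [pref, List.range_succ]

lemma pref_succ_eq_cons (π : ℕ → V) (j : ℕ) :
    pref π (j + 1) = π 0 :: pref (fun m => π (m + 1)) j := by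
  simp [pref, List.range_succ_eq_map]

lemma headD_pref (π : ℕ → V) (j : ℕ) : (pref π j).headD (π j) = π 0 := by
  cases j with
  | zero => rfl
  | succ j => rw [pref_succ_eq_cons]; rfl

lemma pref_congr {π π' : ℕ → V} {j : ℕ} (h : ∀ m < j, π m = π' m) : pref π j = pref π' j :=
  List.map_congr_left fun m hm => h m (List.mem_range.mp hm)

def playCons (v : V) (π : ℕ → V) : ℕ → V
  | 0 => v
  | j + 1 => π j

noncomputable def someSucc (A : Arena V n) (v : V) : V := (A.no_deadlock v).choose

lemma someSucc_spec (A : Arena V n) (v : V) : A.E v (A.someSucc v) :=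
  (A.no_deadlock v).choose_spec

section Strategies

variable {A : Arena V n}

def Strategy.ofFun (f : V → V) (hf : ∀ v, A.E v (f v)) : A.Strategy where
  next _ v := f v
  valid _ v := hf v

lemma Strategy.memoryless_ofFun (f : V → V) (hf : ∀ v, A.E v (f v)) :
    Memoryless (Strategy.ofFun f hf) :=
  fun _ _ _ => rfl

def Strategy.shift (v : V) (σ : A.Strategy) : A.Strategy where
  next h u := σ.next (v :: h) u
  valid _ _ := σ.valid _ _

/-- Move to `first u` from the initial vertex `u`, then play `cont x` as if the play had started
at its second vertex `x` (for the history `_ :: r` and current vertex `u`, `x = r.headD u`). -/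
def Strategy.glue (first : V → V) (hfirst : ∀ u, A.E u (first u)) (cont : V → A.Strategy) :
    A.Strategy where
  next
    | [], u => first u
    | _ :: r, u => (cont (r.headD u)).next r u
  valid
    | [], u => hfirst u
    | _ :: r, u => (cont (r.headD u)).valid r u

lemma IsPlay.cons {π : ℕ → V} {v : V} (hπ : A.IsPlay π) (he : A.E v (π 0)) :
    A.IsPlay (playCons v π)
  | 0 => he
  | j + 1 => hπ j

variable {i : Fin n} {σ : A.Strategy} {π : ℕ → V}

lemma Consistent.tail (h : A.Consistent i σ π) :
    A.Consistent i (σ.shift (π 0)) (fun j => π (j + 1)) := fun j hj => by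
  have key := h (j + 1) hj
  rw [pref_succ_eq_cons] at key
  exact key

lemma Consistent.cons {v : V} (h : A.Consistent i (σ.shift v) π)
    (h0 : A.owner v = i → π 0 = σ.next [] v) : A.Consistent i σ (playCons v π)
  | 0, hv => h0 hv
  | j + 1, hj => by
    rw [pref_succ_eq_cons]
    exact h j hj

lemma Consistent.glue_tail {first : V → V} {hfirst : ∀ u, A.E u (first u)}
    {cont : V → A.Strategy} (h : A.Consistent i (Strategy.glue first hfirst cont) π) :
    A.Consistent i (cont (π 1)) (fun j => π (j + 1)) := fun j hj => by
  have key : π (j + 1 + 1) = (cont ((pref (fun m => π (m + 1)) j).headD (π (j + 1)))).next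
      (pref (fun m => π (m + 1)) j) (π (j + 1)) := h.tail j hj
  have hd : (pref (fun m => π (m + 1)) j).headD (π (j + 1)) = π 1 := headD_pref _ j
  rwa [hd] at key

end Strategies

section Outcome

variable {A : Arena V n} (σ : Fin n → A.Strategy) (v : V)

lemma outcomeAux_fst (j : ℕ) : (outcomeAux A σ v j).1 = pref (outcome A σ v) j := by
  induction j with
  | zero => rfl
  | succ j ih => rw [pref_succ, ← ih]; rfl

lemma outcome_zero : outcome A σ v 0 = v :=
  rfl

lemma outcome_succ (j : ℕ) :
    outcome A σ v (j + 1) =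
      (σ (A.owner (outcome A σ v j))).next (pref (outcome A σ v) j) (outcome A σ v j) := by
  rw [← outcomeAux_fst]
  rfl

lemma isPlay_outcome : A.IsPlay (outcome A σ v) := fun j => by
  rw [outcome_succ]
  exact Strategy.valid _ _ _

lemma consistent_outcome (i : Fin n) : A.Consistent i (σ i) (outcome A σ v) := fun j hj => by
  rw [outcome_succ, hj]

variable {σ v}

lemma eq_outcome_of_consistent {π : ℕ → V} (h0 : π 0 = v) (h : ∀ i, A.Consistent i (σ i) π) :
    π = outcome A σ v := by
  funext j
  induction j using Nat.strong_induction_on with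
  | _ j ih =>
    cases j with
    | zero => exact h0
    | succ j =>
      rw [h _ j rfl, outcome_succ, pref_congr fun m hm => ih m (by omega), ih j (by omega)]

end Outcome

section ShortestPath

variable (w : V → V → ℕ) (T : Set V) {π : ℕ → V}

lemma spCost_eq_top (h : ∀ k, π k ∉ T) : spCost w T π = ⊤ := by
  simp [spCost, h]

lemma spCost_eq_zero (h : π 0 ∈ T) : spCost w T π = 0 := by
  rw [spCost, if_pos ⟨0, h⟩, Nat.sInf_eq_zero.mpr (Or.inl h), Finset.sum_range_zero]

lemma spCost_eq_add_tail (h : π 0 ∉ T) :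
    spCost w T π = w (π 0) (π 1) + spCost w T (fun j => π (j + 1)) := by
  by_cases hT : ∃ k, π (k + 1) ∈ T
  · have hT' : ∃ k, π k ∈ T := let ⟨k, hk⟩ := hT; ⟨k + 1, hk⟩
    have hpos : 1 ≤ sInf {k | π k ∈ T} :=
      Nat.one_le_iff_ne_zero.mpr fun h0 => h (h0 ▸ Nat.sInf_mem hT')
    rw [spCost, spCost, if_pos hT', if_pos hT, ← Nat.sInf_add hpos, Finset.sum_range_succ',
      add_comm]
  · have hT' : ¬ ∃ k, π k ∈ T := by
      rintro ⟨_ | k, hk⟩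
      exacts [h hk, hT ⟨k, hk⟩]
    simp [spCost, hT, hT']

lemma spCost_mem_range_toENNReal (π : ℕ → V) : spCost w T π ∈ Set.range ENat.toENNReal := by
  unfold spCost
  split_ifs
  · exact ⟨((∑ j ∈ Finset.range (sInf {k | π k ∈ T}), w (π j) (π (j + 1)) : ℕ) : ℕ∞), by
      rw [ENat.toENNReal_coe, Nat.cast_sum]⟩
  · exact ⟨⊤, rfl⟩

theorem le_spCost_of_potential (g : V → ℝ≥0∞) (hT : ∀ x ∈ T, g x = 0)
    (hstep : ∀ j, π j ∉ T → g (π j) ≤ w (π j) (π (j + 1)) + g (π (j + 1))) :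
    g (π 0) ≤ spCost w T π := by
  by_cases hreach : ∃ k, π k ∈ T
  · obtain ⟨k, hk⟩ := hreach
    induction k generalizing π with
    | zero => rw [hT _ hk]; exact zero_le
    | succ k ih =>
      by_cases h0 : π 0 ∈ T
      · rw [hT _ h0]; exact zero_le
      · rw [spCost_eq_add_tail w T h0]
        exact (hstep 0 h0).trans (add_le_add_right (ih (fun j => hstep (j + 1)) hk) _)
  · rw [spCost_eq_top w T (not_exists.mp hreach)]
    exact le_top

end ShortestPath

section TwoPlayer

variable {A : Arena V 2} (w : V → V → ℕ) (T : Set V) {v : V}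

noncomputable def guaranteedCost (A : Arena V 2) (c : (ℕ → V) → ℝ≥0∞) (σ₁ : A.Strategy)
    (v : V) : ℝ≥0∞ :=
  ⨆ σ₂ : A.Strategy, c (outcome A ![σ₁, σ₂] v)

lemma valIS_eq_iInf_guaranteedCost (c : (ℕ → V) → ℝ≥0∞) :
    valIS A c v = ⨅ σ₁, guaranteedCost A c σ₁ v :=
  rfl

lemma exists_spCost_outcome_glue_le {first : V → V} (hfirst : ∀ u, A.E u (first u))
    (cont : V → A.Strategy) (hv : v ∉ T) (σ₂ : A.Strategy) :
    ∃ v₁, A.E v v₁ ∧ (A.owner v = 0 → v₁ = first v) ∧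
      spCost w T (outcome A ![Strategy.glue first hfirst cont, σ₂] v) ≤
        w v v₁ + guaranteedCost A (spCost w T) (cont v₁) v₁ := by
  set π := outcome A ![Strategy.glue first hfirst cont, σ₂] v
  have htail : (fun j => π (j + 1)) = outcome A ![cont (π 1), σ₂.shift v] (π 1) := by
    refine eq_outcome_of_consistent rfl fun i => ?_
    fin_cases i
    · exact Consistent.glue_tail (hfirst := hfirst) (consistent_outcome _ v 0)
    · exact (consistent_outcome _ v 1).tail
  refine ⟨π 1, isPlay_outcome _ v 0, fun h0 => ?_, ?_⟩
  · show outcome A _ v (0 + 1) = first v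
    rw [outcome_succ, outcome_zero, h0]
    rfl
  · rw [spCost_eq_add_tail w T hv, htail]
    exact add_le_add_right (le_iSup (fun τ => spCost w T (outcome A ![cont (π 1), τ] (π 1))) _) _

lemma valIS_le_add_of_owner_zero {v' : V} (hv : v ∉ T) (hown : A.owner v = 0) (he : A.E v v') :
    valIS A (spCost w T) v ≤ w v v' + valIS A (spCost w T) v' := by
  let first u := if u = v then v' else A.someSucc u
  have hfirst : ∀ u, A.E u (first u) := fun u => by
    by_cases h : u = v
    · rw [h]
      simpa [first] using he
    · simp only [first, if_neg h, someSucc_spec]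
  rw [valIS_eq_iInf_guaranteedCost, valIS_eq_iInf_guaranteedCost, ENNReal.add_iInf]
  refine le_iInf fun σ₁ =>
    iInf_le_of_le (Strategy.glue first hfirst fun _ => σ₁) (iSup_le fun σ₂ => ?_)
  obtain ⟨v₁, -, hv₁, hle⟩ := exists_spCost_outcome_glue_le w T hfirst (fun _ => σ₁) hv σ₂
  rwa [hv₁ hown, show first v = v' from if_pos rfl] at hle

/-- Player 1 can answer each first move `s` of player 2 with a nearly optimal strategy from `s`;
the exchange of `⨆ s` and `⨅ σ₁` is complete distributivity over choice functions. -/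
lemma valIS_le_iSup_add (hv : v ∉ T) :
    valIS A (spCost w T) v ≤ ⨆ s : {x // A.E v x}, (w v s + valIS A (spCost w T) s) := by
  simp_rw [valIS_eq_iInf_guaranteedCost, ENNReal.add_iInf, iSup_iInf_eq]
  refine le_iInf fun reply => ?_
  let cont x := if h : A.E v x then reply ⟨x, h⟩ else Strategy.ofFun A.someSucc A.someSucc_spec
  refine iInf_le_of_le (Strategy.glue A.someSucc A.someSucc_spec cont) (iSup_le fun σ₂ => ?_)
  obtain ⟨v₁, he, -, hle⟩ := exists_spCost_outcome_glue_le w T A.someSucc_spec cont hv σ₂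
  refine hle.trans (le_iSup_of_le ⟨v₁, he⟩ ?_)
  simp only [cont, dif_pos he, le_refl]

lemma valIS_mem_range_toENNReal {c : (ℕ → V) → ℝ≥0∞}
    (hc : ∀ π, c π ∈ Set.range ENat.toENNReal) (v : V) :
    valIS A c v ∈ Set.range ENat.toENNReal := by
  choose f hf using hc
  exact ⟨⨅ σ₁, ⨆ σ₂, f (outcome A ![σ₁, σ₂] v), by simp [valIS, hf]⟩

lemma valIS_eq_zero_of_mem (hv : v ∈ T) : valIS A (spCost w T) v = 0 :=
  le_antisymm (iInf_le_of_le (Strategy.ofFun A.someSucc A.someSucc_spec)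
    (iSup_le fun _ => (spCost_eq_zero w T hv).le)) zero_le

lemma not_mem_of_mem_winRegion_safeObj (hv : v ∈ WinRegion A 1 (SafeObj T)) : v ∉ T := by
  obtain ⟨σ, hσ⟩ := hv
  exact hσ _ (isPlay_outcome _ v) rfl (by simpa using consistent_outcome ![σ, σ] v 1) 0

lemma valIS_eq_top_of_mem_winRegion_safeObj (hv : v ∈ WinRegion A 1 (SafeObj T)) :
    valIS A (spCost w T) v = ⊤ := by
  obtain ⟨σ, hσ⟩ := hv
  refine top_unique (le_iInf fun σ₁ => le_iSup_of_le σ ?_)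
  rw [spCost_eq_top w T (hσ _ (isPlay_outcome _ v) rfl
    (by simpa using consistent_outcome ![σ₁, σ] v 1))]

lemma mem_winRegion_safeObj_of_edge {v' : V} {σ : A.Strategy}
    (hσ : ∀ π, A.IsPlay π → π 0 = v → A.Consistent 1 σ π → π ∈ SafeObj T) (he : A.E v v')
    (hmove : A.owner v = 1 → v' = σ.next [] v) : v' ∈ WinRegion A 1 (SafeObj T) :=
  ⟨σ.shift v, fun _ hπ h0 hc j =>
    hσ _ (hπ.cons (h0 ▸ he)) rfl (hc.cons fun ho => h0.trans (hmove ho)) (j + 1)⟩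

lemma mem_winRegion_safeObj_of_owner_zero {v' : V} (hv : v ∈ WinRegion A 1 (SafeObj T))
    (hown : A.owner v = 0) (he : A.E v v') : v' ∈ WinRegion A 1 (SafeObj T) := by
  obtain ⟨σ, hσ⟩ := hv
  exact mem_winRegion_safeObj_of_edge T hσ he fun h => absurd (hown.symm.trans h) (by decide)

lemma exists_succ_mem_winRegion_safeObj (hv : v ∈ WinRegion A 1 (SafeObj T)) :
    ∃ v', A.E v v' ∧ v' ∈ WinRegion A 1 (SafeObj T) := by
  obtain ⟨σ, hσ⟩ := hv
  exact ⟨_, σ.valid [] v, mem_winRegion_safeObj_of_edge T hσ (σ.valid [] v) fun _ => rfl⟩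

variable (A) (α : ℕ)

noncomputable def cappedValue (v : V) : ℝ≥0∞ := min (valIS A (spCost w T) v) α

lemma cappedValue_eq_zero_of_mem (hv : v ∈ T) : cappedValue A w T α v = 0 := by
  rw [cappedValue, valIS_eq_zero_of_mem w T hv, zero_min]

lemma cappedValue_eq_of_mem_winRegion_safeObj (hv : v ∈ WinRegion A 1 (SafeObj T)) :
    cappedValue A w T α v = α := by
  rw [cappedValue, valIS_eq_top_of_mem_winRegion_safeObj w T hv, min_eq_right le_top]

lemma cappedValue_le_add_of_owner_zero {v' : V} (hv : v ∉ T) (hown : A.owner v = 0)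
    (he : A.E v v') : cappedValue A w T α v ≤ w v v' + cappedValue A w T α v' :=
  (min_le_min_right _ (valIS_le_add_of_owner_zero w T hv hown he)).trans
    (ENNReal.min_add_le_add_min ..)

/-- Capping at `α` makes the supremum in `valIS_le_iSup_add` one of finitely many natural
numbers, hence attained. -/
lemma exists_cappedValue_le_add (hv : v ∉ T) :
    ∃ v', A.E v v' ∧ cappedValue A w T α v ≤ w v v' + cappedValue A w T α v' := by
  have : Nonempty {x // A.E v x} := ⟨⟨_, A.someSucc_spec v⟩⟩
  let f (s : {x // A.E v x}) : ℝ≥0∞ := min (w v s + valIS A (spCost w T) s) α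
  have hle : cappedValue A w T α v ≤ ⨆ s, f s :=
    (min_le_min_right _ (valIS_le_iSup_add w T hv)).trans_eq (iSup_inf_eq _ _)
  have hnat (s) : f s ∈ Set.range ENat.toENNReal := by
    obtain ⟨m, hm⟩ := valIS_mem_range_toENNReal (A := A) (spCost_mem_range_toENNReal w T) s
    exact ⟨min (w v s + m) α, by simp [f, hm]⟩
  obtain ⟨s, hs⟩ := ENNReal.exists_eq_iSup_of_mem_range_toENNReal hnat
    ((iSup_le fun s => min_le_right _ _).trans_lt (ENNReal.natCast_lt_top α))
  exact ⟨s, s.2, (hle.trans hs.ge).trans (ENNReal.min_add_le_add_min ..)⟩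

lemma exists_punishing_move (v : V) : ∃ v', A.E v v' ∧
    (v ∈ WinRegion A 1 (SafeObj T) → v' ∈ WinRegion A 1 (SafeObj T)) ∧
    (v ∉ T → cappedValue A w T α v ≤ w v v' + cappedValue A w T α v') := by
  by_cases hW : v ∈ WinRegion A 1 (SafeObj T)
  · obtain ⟨v', he, hv'⟩ := exists_succ_mem_winRegion_safeObj T hW
    refine ⟨v', he, fun _ => hv', fun _ => ?_⟩
    rw [cappedValue_eq_of_mem_winRegion_safeObj A w T α hW,
      cappedValue_eq_of_mem_winRegion_safeObj A w T α hv']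
    exact le_add_self
  · by_cases hT : v ∈ T
    · exact ⟨_, A.someSucc_spec v, fun h => absurd h hW, fun h => absurd hT h⟩
    · obtain ⟨v', he, hle⟩ := exists_cappedValue_le_add A w T α hT
      exact ⟨v', he, fun h => absurd h hW, fun _ => hle⟩

end TwoPlayer

end Arena

/-- In a zero-sum shortest-path game, for every `α ∈ ℕ`, player 2 has
a memoryless strategy that wins the safety game from their safety winning region
and ensures a cost of at least `min (val v) α` from every vertex `v`. -/
theorem spath_player2_memoryless_punishing
    (V : Type) (A : Arena V 2) (T : Set V) (w : V → V → ℕ) (α : ℕ) :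
    ∃ σ2 : A.Strategy, Memoryless σ2 ∧
      (∀ v ∈ WinRegion A 1 (SafeObj T),
        ∀ π : ℕ → V, A.IsPlay π → π 0 = v → A.Consistent 1 σ2 π → ∀ j, π j ∉ T) ∧
      (∀ (v : V) (π : ℕ → V), A.IsPlay π → π 0 = v → A.Consistent 1 σ2 π →
        min (valIS A (spCost w T) v) (α : ℝ≥0∞) ≤ spCost w T π) := by
  choose f hfE hfW hfle using exists_punishing_move A w T α
  refine ⟨Strategy.ofFun f hfE, Strategy.memoryless_ofFun f hfE, ?_, ?_⟩
  · intro v hv π hπ h0 hcons j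
    refine not_mem_of_mem_winRegion_safeObj T (?_ : π j ∈ WinRegion A 1 (SafeObj T))
    induction j with
    | zero => exact h0 ▸ hv
    | succ j ih =>
      obtain hown | hown : A.owner (π j) = 0 ∨ A.owner (π j) = 1 := by omega
      · exact mem_winRegion_safeObj_of_owner_zero T ih hown (hπ j)
      · rw [hcons j hown]
        exact hfW _ ih
  · rintro v π hπ rfl hcons
    refine le_spCost_of_potential w T (cappedValue A w T α)
      (fun _ hx => cappedValue_eq_zero_of_mem A w T α hx) fun j hj => ?_
    obtain hown | hown : A.owner (π j) = 0 ∨ A.owner (π j) = 1 := by omega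
    · exact cappedValue_le_add_of_owner_zero A w T α hj hown (hπ j)
    · rw [hcons j hown]
      exact hfle _ hj
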